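/- Let Γ be a disconnected 4-saturating simple graph with ν(Γ) = 3 on 8 vertices with no isolated vertices. If Γ has exactly two connected components, one of which is a triangle, then the other component is a 3-saturating graph on 5 vertices, i.e., it is spanned by a pentagon or by two triangles meeting at a vertex. -/

import Mathlib

open scoped Classical

/-- A matching of a vertex-weighted graph: a multiset of (ordered) edges in which
each vertex `v` appears at most `w v` times. -/
def IsWMatching {V : Type*} (G : SimpleGraph V) (w : V → ℕ) (M : Multiset (V × V)) : Prop :=
  (∀ e ∈ M, G.Adj e.1 e.2) ∧
  ∀ v : V, (M.map Prod.fst).count v + (M.map Prod.snd).count v ≤ w v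

/-- The matching number of a vertex-weighted graph. -/
noncomputable def wNu {V : Type*} (G : SimpleGraph V) (w : V → ℕ) : ℕ :=
  sSup {n | ∃ M : Multiset (V × V), IsWMatching G w M ∧ Multiset.card M = n}

/-- The weighted degree of a vertex: the sum of the weights of its neighbors. -/
noncomputable def wDeg {V : Type*} (G : SimpleGraph V) [Fintype V] (w : V → ℕ) (i : V) : ℕ :=
  ∑ j ∈ Finset.univ.filter (fun j => G.Adj i j), w j

/-- A weighted graph is `t`-saturating if `ν(Ω) < t` and
`ν(Ω − N(i)) ≥ t − deg(i)` for every vertex `i`. -/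
def IsTSat {V : Type*} (G : SimpleGraph V) [Fintype V] (w : V → ℕ) (t : ℕ) : Prop :=
  wNu G w < t ∧
  ∀ i : V, t - wDeg G w i ≤ wNu (G.induce {v | ¬ G.Adj i v}) (fun v => w v.1)

/-- The polarization of a weighted graph: each vertex `v` is replaced by `w v` copies. -/
def polarize {V : Type*} (G : SimpleGraph V) (w : V → ℕ) :
    SimpleGraph (Σ v : V, Fin (w v)) where
  Adj a b := G.Adj a.1 b.1
  symm := by constructor; intro _ _ h; exact G.adj_symm h
  loopless := by constructor; intro a h; exact G.irrefl h

/-- The disjoint union of two simple graphs. -/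
def sumGraph {α β : Type*} (G : SimpleGraph α) (H : SimpleGraph β) :
    SimpleGraph (α ⊕ β) where
  Adj a b := match a, b with
    | Sum.inl x, Sum.inl y => G.Adj x y
    | Sum.inr x, Sum.inr y => H.Adj x y
    | _, _ => False
  symm := by constructor; rintro (x | x) (y | y) h <;> first | exact h.symm | exact h
  loopless := by constructor; rintro (x | x) h <;> first | exact G.irrefl h | exact H.irrefl h

namespace Aux
variable {V V' : Type*}

lemma count_sum_eq [Fintype V] (s : Multiset V) : ∑ v : V, s.count v = Multiset.card s := by
  rw [← Multiset.toFinset_sum_count_eq s]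
  exact (Finset.sum_subset (Finset.subset_univ _) (fun x _ hx => by
    simpa [Multiset.count_eq_zero] using fun h => hx (Multiset.mem_toFinset.mpr h))).symm

lemma matching_bound [Fintype V] {G : SimpleGraph V} {w : V → ℕ} {M : Multiset (V × V)}
    (h : IsWMatching G w M) : 2 * Multiset.card M ≤ ∑ v : V, w v := by
  have h1 := count_sum_eq (M.map Prod.fst)
  have h2 := count_sum_eq (M.map Prod.snd)
  simp only [Multiset.card_map] at h1 h2
  have : (∑ v : V, (M.map Prod.fst).count v) + (∑ v : V, (M.map Prod.snd).count v)
      ≤ ∑ v : V, w v := by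
    rw [← Finset.sum_add_distrib]; exact Finset.sum_le_sum fun v _ => h.2 v
  omega

lemma empty_matching (G : SimpleGraph V) (w : V → ℕ) : IsWMatching G w 0 :=
  ⟨fun e h => by simp at h, fun v => by simp⟩

lemma setNonempty (G : SimpleGraph V) (w : V → ℕ) :
    {n | ∃ M : Multiset (V × V), IsWMatching G w M ∧ Multiset.card M = n}.Nonempty :=
  ⟨0, 0, empty_matching G w, rfl⟩

lemma setBdd [Fintype V] (G : SimpleGraph V) (w : V → ℕ) :
    BddAbove {n | ∃ M : Multiset (V × V), IsWMatching G w M ∧ Multiset.card M = n} := by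
  refine ⟨∑ v : V, w v, ?_⟩
  rintro n ⟨M, hM, rfl⟩
  have := matching_bound hM
  omega

lemma le_wNu [Fintype V] {G : SimpleGraph V} {w : V → ℕ} {M : Multiset (V × V)}
    (h : IsWMatching G w M) : Multiset.card M ≤ wNu G w :=
  le_csSup (setBdd G w) ⟨M, h, rfl⟩

lemma exists_matching [Fintype V] (G : SimpleGraph V) (w : V → ℕ) :
    ∃ M : Multiset (V × V), IsWMatching G w M ∧ Multiset.card M = wNu G w :=
  Nat.sSup_mem (setNonempty G w) (setBdd G w)

lemma wNu_le [Fintype V] {G : SimpleGraph V} {w : V → ℕ} {n : ℕ}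
    (h : ∀ M : Multiset (V × V), IsWMatching G w M → Multiset.card M ≤ n) : wNu G w ≤ n := by
  obtain ⟨M, hM, hc⟩ := exists_matching G w
  rw [← hc]; exact h M hM

lemma two_wNu_le [Fintype V] (G : SimpleGraph V) (w : V → ℕ) :
    2 * wNu G w ≤ ∑ v : V, w v := by
  obtain ⟨M, hM, hc⟩ := exists_matching G w
  rw [← hc]; exact matching_bound hM

lemma matching_bound_erase [Fintype V] {G : SimpleGraph V} {w : V → ℕ} {M : Multiset (V × V)}
    (h : IsWMatching G w M) (u : V) (hu : ∀ v, ¬ G.Adj u v) :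
    2 * Multiset.card M ≤ ∑ v ∈ Finset.univ.erase u, w v := by
  have hcf : (M.map Prod.fst).count u = 0 := by
    rw [Multiset.count_eq_zero]
    intro hmem
    obtain ⟨e, he, hfe⟩ := Multiset.mem_map.mp hmem
    exact hu e.2 (hfe ▸ h.1 e he)
  have hcs : (M.map Prod.snd).count u = 0 := by
    rw [Multiset.count_eq_zero]
    intro hmem
    obtain ⟨e, he, hfe⟩ := Multiset.mem_map.mp hmem
    exact hu e.1 ((hfe ▸ h.1 e he).symm)
  have h1 := count_sum_eq (M.map Prod.fst)
  have h2 := count_sum_eq (M.map Prod.snd)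
  simp only [Multiset.card_map] at h1 h2
  have e1 : ∑ v : V, (M.map Prod.fst).count v
      = ∑ v ∈ Finset.univ.erase u, (M.map Prod.fst).count v := by
    rw [← Finset.add_sum_erase _ _ (Finset.mem_univ u), hcf, zero_add]
  have e2 : ∑ v : V, (M.map Prod.snd).count v
      = ∑ v ∈ Finset.univ.erase u, (M.map Prod.snd).count v := by
    rw [← Finset.add_sum_erase _ _ (Finset.mem_univ u), hcs, zero_add]
  have : (∑ v ∈ Finset.univ.erase u, (M.map Prod.fst).count v) +
        (∑ v ∈ Finset.univ.erase u, (M.map Prod.snd).count v)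
      ≤ ∑ v ∈ Finset.univ.erase u, w v := by
    rw [← Finset.sum_add_distrib]; exact Finset.sum_le_sum fun v _ => h.2 v
  omega

lemma matching_map (e : V ≃ V') {G : SimpleGraph V} {G' : SimpleGraph V'}
    (hadj : ∀ a b, G.Adj a b ↔ G'.Adj (e a) (e b)) {w : V → ℕ} {w' : V' → ℕ}
    (hw : ∀ v, w' (e v) = w v) {M : Multiset (V × V)} (h : IsWMatching G w M) :
    IsWMatching G' w' (M.map (Prod.map e e)) := by
  constructor
  · intro x hx
    obtain ⟨a, ha, rfl⟩ := Multiset.mem_map.mp hx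
    exact (hadj a.1 a.2).mp (h.1 a ha)
  · intro v'
    have hv' : v' = e (e.symm v') := (e.apply_symm_apply v').symm
    have hf : (M.map (Prod.map e e)).map Prod.fst = (M.map Prod.fst).map e := by
      simp [Multiset.map_map]
    have hs : (M.map (Prod.map e e)).map Prod.snd = (M.map Prod.snd).map e := by
      simp [Multiset.map_map]
    rw [hf, hs, hv', Multiset.count_map_eq_count' e _ e.injective,
      Multiset.count_map_eq_count' e _ e.injective, hw]
    exact h.2 _

lemma wNu_le_of_equiv [Fintype V'] (e : V ≃ V') {G : SimpleGraph V} {G' : SimpleGraph V'}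
    (hadj : ∀ a b, G.Adj a b ↔ G'.Adj (e a) (e b)) {w : V → ℕ} {w' : V' → ℕ}
    (hw : ∀ v, w' (e v) = w v) : wNu G w ≤ wNu G' w' := by
  apply csSup_le (setNonempty G w)
  rintro n ⟨M, hM, rfl⟩
  have := le_wNu (matching_map e hadj hw hM)
  simpa using this

lemma wNu_congr [Fintype V] [Fintype V'] (e : V ≃ V') {G : SimpleGraph V} {G' : SimpleGraph V'}
    (hadj : ∀ a b, G.Adj a b ↔ G'.Adj (e a) (e b)) {w : V → ℕ} {w' : V' → ℕ}
    (hw : ∀ v, w' (e v) = w v) : wNu G w = wNu G' w' := by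
  refine le_antisymm (wNu_le_of_equiv e hadj hw) (wNu_le_of_equiv e.symm ?_ ?_)
  · intro a b
    have := hadj (e.symm a) (e.symm b)
    simpa using this.symm
  · intro v; rw [← hw (e.symm v), e.apply_symm_apply]

set_option maxHeartbeats 1000000

attribute [-instance] instDecidableEqSum
variable {α β : Type*}

def φl : (α ⊕ β) × (α ⊕ β) → Option (α × α) := fun e => match e with
  | (Sum.inl a, Sum.inl b) => some (a, b)
  | _ => none

def φr : (α ⊕ β) × (α ⊕ β) → Option (β × β) := fun e => match e with
  | (Sum.inr a, Sum.inr b) => some (a, b)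
  | _ => none

section split
variable {G : SimpleGraph α} {H : SimpleGraph β} {M : Multiset ((α ⊕ β) × (α ⊕ β))}

lemma split_card (hs : ∀ e ∈ M, (sumGraph G H).Adj e.1 e.2) :
    Multiset.card (M.filterMap φl) + Multiset.card (M.filterMap φr) = Multiset.card M := by
  revert hs
  induction M using Multiset.induction_on with
  | empty => simp
  | cons a M ih =>
    intro hs
    have ha := hs a (Multiset.mem_cons_self a M)
    have hrest := ih fun e he => hs e (Multiset.mem_cons_of_mem he)
    obtain ⟨(x | x), (y | y)⟩ := a
    · rw [Multiset.filterMap_cons_some _ _ _ (rfl : φl (Sum.inl x, Sum.inl y) = some (x, y)),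
        Multiset.filterMap_cons_none _ _ (rfl : φr (Sum.inl x, Sum.inl y) = none)]
      simp only [Multiset.card_cons]; omega
    · exact absurd ha (by simp [sumGraph])
    · exact absurd ha (by simp [sumGraph])
    · rw [Multiset.filterMap_cons_none _ _ (rfl : φl (Sum.inr x, Sum.inr y) = none),
        Multiset.filterMap_cons_some _ _ _ (rfl : φr (Sum.inr x, Sum.inr y) = some (x, y))]
      simp only [Multiset.card_cons]; omega
end split

section counts
variable {M : Multiset ((α ⊕ β) × (α ⊕ β))}

lemma countl (hs : ∀ e ∈ M, e.1.isLeft = e.2.isLeft) :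
    (∀ a : α, ((M.filterMap φl).map Prod.fst).count a = (M.map Prod.fst).count (Sum.inl a) ∧
      ((M.filterMap φl).map Prod.snd).count a = (M.map Prod.snd).count (Sum.inl a)) ∧
    ∀ b : β, ((M.filterMap φr).map Prod.fst).count b = (M.map Prod.fst).count (Sum.inr b) ∧
      ((M.filterMap φr).map Prod.snd).count b = (M.map Prod.snd).count (Sum.inr b) := by
  revert hs
  induction M using Multiset.induction_on with
  | empty => simp
  | cons e M ih =>
    intro hs
    have he := hs e (Multiset.mem_cons_self e M)
    have hrest := ih fun e' he' => hs e' (Multiset.mem_cons_of_mem he')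
    obtain ⟨(x | x), (y | y)⟩ := e <;> simp only [Sum.isLeft] at he
    · rw [Multiset.filterMap_cons_some _ _ _ (rfl : φl (Sum.inl x, Sum.inl y) = some (x, y)),
        Multiset.filterMap_cons_none _ _ (rfl : φr (Sum.inl x, Sum.inl y) = none)]
      have h1 := fun a => (hrest.1 a).1
      have h2 := fun a => (hrest.1 a).2
      have h3 := fun b => (hrest.2 b).1
      have h4 := fun b => (hrest.2 b).2
      refine ⟨fun a => ⟨?_, ?_⟩, fun b => ⟨?_, ?_⟩⟩ <;>
        simp [Multiset.count_cons, Sum.inl.injEq, Sum.inr.injEq, h1, h2, h3, h4]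
    · exact absurd he (by simp)
    · exact absurd he (by simp)
    · rw [Multiset.filterMap_cons_none _ _ (rfl : φl (Sum.inr x, Sum.inr y) = none),
        Multiset.filterMap_cons_some _ _ _ (rfl : φr (Sum.inr x, Sum.inr y) = some (x, y))]
      have h1 := fun a => (hrest.1 a).1
      have h2 := fun a => (hrest.1 a).2
      have h3 := fun b => (hrest.2 b).1
      have h4 := fun b => (hrest.2 b).2
      refine ⟨fun a => ⟨?_, ?_⟩, fun b => ⟨?_, ?_⟩⟩ <;>
        simp [Multiset.count_cons, Sum.inl.injEq, Sum.inr.injEq, h1, h2, h3, h4]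
end counts

lemma wNu_sumGraph [Fintype α] [Fintype β] (G : SimpleGraph α) (H : SimpleGraph β)
    (w : α ⊕ β → ℕ) :
    wNu (sumGraph G H) w = wNu G (fun a => w (Sum.inl a)) + wNu H (fun b => w (Sum.inr b)) := by
  apply le_antisymm
  · apply wNu_le
    intro M hM
    have hshape : ∀ e ∈ M, e.1.isLeft = e.2.isLeft := by
      intro e he
      have := hM.1 e he
      obtain ⟨(x | x), (y | y)⟩ := e <;> simp_all [sumGraph]
    have hM1 : IsWMatching G (fun a => w (Sum.inl a)) (M.filterMap φl) := by
      constructor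
      · intro x hx
        obtain ⟨e, he, hsome⟩ := (Multiset.mem_filterMap _ _).mp hx
        have hadj := hM.1 e he
        obtain ⟨(a | a), (b | b)⟩ := e
        · obtain rfl : x = (a, b) := by simpa [φl] using hsome.symm
          exact hadj
        · exact absurd hsome (by simp [φl])
        · exact absurd hsome (by simp [φl])
        · exact absurd hsome (by simp [φl])
      · intro v
        rw [((countl hshape).1 v).1, ((countl hshape).1 v).2]
        exact hM.2 (Sum.inl v)
    have hM2 : IsWMatching H (fun b => w (Sum.inr b)) (M.filterMap φr) := by
      constructor
      · intro x hx
        obtain ⟨e, he, hsome⟩ := (Multiset.mem_filterMap _ _).mp hx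
        have hadj := hM.1 e he
        obtain ⟨(a | a), (b | b)⟩ := e
        · exact absurd hsome (by simp [φr])
        · exact absurd hsome (by simp [φr])
        · exact absurd hsome (by simp [φr])
        · obtain rfl : x = (a, b) := by simpa [φr] using hsome.symm
          exact hadj
      · intro v
        rw [((countl hshape).2 v).1, ((countl hshape).2 v).2]
        exact hM.2 (Sum.inr v)
    have := split_card (G := G) (H := H) hM.1
    have h1 := le_wNu hM1
    have h2 := le_wNu hM2
    omega
  · obtain ⟨M1, hM1, hc1⟩ := exists_matching G (fun a => w (Sum.inl a))
    obtain ⟨M2, hM2, hc2⟩ := exists_matching H (fun b => w (Sum.inr b))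
    set M : Multiset ((α ⊕ β) × (α ⊕ β)) :=
      M1.map (Prod.map Sum.inl Sum.inl) + M2.map (Prod.map Sum.inr Sum.inr) with hMdef
    have hM : IsWMatching (sumGraph G H) w M := by
      constructor
      · intro e he
        rcases Multiset.mem_add.mp he with h | h <;>
          obtain ⟨x, hx, rfl⟩ := Multiset.mem_map.mp h
        · exact hM1.1 x hx
        · exact hM2.1 x hx
      · intro v
        have hf1 : (M1.map (Prod.map (Sum.inl : α → α ⊕ β) (Sum.inl : α → α ⊕ β))).map Prod.fst
            = (M1.map Prod.fst).map (Sum.inl : α → α ⊕ β) := by simp [Multiset.map_map]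
        have hs1 : (M1.map (Prod.map (Sum.inl : α → α ⊕ β) (Sum.inl : α → α ⊕ β))).map Prod.snd
            = (M1.map Prod.snd).map (Sum.inl : α → α ⊕ β) := by simp [Multiset.map_map]
        have hf2 : (M2.map (Prod.map (Sum.inr : β → α ⊕ β) (Sum.inr : β → α ⊕ β))).map Prod.fst
            = (M2.map Prod.fst).map (Sum.inr : β → α ⊕ β) := by simp [Multiset.map_map]
        have hs2 : (M2.map (Prod.map (Sum.inr : β → α ⊕ β) (Sum.inr : β → α ⊕ β))).map Prod.snd
            = (M2.map Prod.snd).map (Sum.inr : β → α ⊕ β) := by simp [Multiset.map_map]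
        rw [hMdef]
        simp only [Multiset.map_add, Multiset.count_add, hf1, hs1, hf2, hs2]
        obtain (a | b) := v
        · rw [Multiset.count_map_eq_count' _ _ Sum.inl_injective,
            Multiset.count_map_eq_count' _ _ Sum.inl_injective]
          have z1 : ((M2.map Prod.fst).map Sum.inr).count (Sum.inl a) = 0 := by
            simp [Multiset.count_eq_zero]
          have z2 : ((M2.map Prod.snd).map Sum.inr).count (Sum.inl a) = 0 := by
            simp [Multiset.count_eq_zero]
          rw [z1, z2]
          simpa using hM1.2 a
        · rw [Multiset.count_map_eq_count' _ _ Sum.inr_injective,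
            Multiset.count_map_eq_count' _ _ Sum.inr_injective]
          have z1 : ((M1.map Prod.fst).map Sum.inl).count (Sum.inr b) = 0 := by
            simp [Multiset.count_eq_zero]
          have z2 : ((M1.map Prod.snd).map Sum.inl).count (Sum.inr b) = 0 := by
            simp [Multiset.count_eq_zero]
          rw [z1, z2]
          simpa using hM2.2 b
    have := le_wNu hM
    rw [hMdef] at this
    simp only [Multiset.card_add, Multiset.card_map, hc1, hc2] at this
    omega

lemma sum_one_erase {γ : Type*} [Fintype γ] (inst : DecidableEq γ) (u : γ) :
    ∑ _v ∈ @Finset.erase _ inst Finset.univ u, (1 : ℕ) = Fintype.card γ - 1 := by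
  rw [Finset.sum_const, smul_eq_mul, mul_one,
    Finset.card_erase_of_mem (Finset.mem_univ _), Finset.card_univ]

def eInd {V₁ V₂ : Type*} (H₁ : SimpleGraph V₁) (H₂ : SimpleGraph V₂) (i : V₂) :
    {v : V₁ ⊕ V₂ // v ∈ {v : V₁ ⊕ V₂ | ¬ (sumGraph H₁ H₂).Adj (Sum.inr i) v}} ≃
    (V₁ ⊕ {v : V₂ // v ∈ {v : V₂ | ¬ H₂.Adj i v}}) where
  toFun x := match x with
    | ⟨Sum.inl a, _⟩ => Sum.inl a
    | ⟨Sum.inr b, hb⟩ => Sum.inr ⟨b, hb⟩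
  invFun y := match y with
    | Sum.inl a => ⟨Sum.inl a, fun h => h⟩
    | Sum.inr ⟨b, hb⟩ => ⟨Sum.inr b, hb⟩
  left_inv := by rintro ⟨(a | b), h⟩ <;> rfl
  right_inv := by rintro (a | ⟨b, hb⟩) <;> rfl

end Aux

namespace Aux2

def pFst : Fin 10 → Fin 5 := ![0, 0, 0, 0, 1, 1, 1, 2, 2, 3]
def pSnd : Fin 10 → Fin 5 := ![1, 2, 3, 4, 2, 3, 4, 3, 4, 4]
def idx : Fin 5 → Fin 5 → Fin 10 := fun a b =>
  ![![0, 0, 1, 2, 3], ![0, 0, 4, 5, 6], ![1, 4, 0, 7, 8], ![2, 5, 7, 0, 9],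
    ![3, 6, 8, 9, 0]] a b

def adjb (f : Fin 10 → Bool) (a b : Fin 5) : Bool := !(a == b) && f (idx a b)

def degb (f : Fin 10 → Bool) (a : Fin 5) : ℕ := ((List.finRange 5).filter (adjb f a)).length

def hamOn (f : Fin 10 → Bool) (l : List (Fin 5)) : Bool :=
  match l with
  | [a, b, c, d, e] => adjb f a b && adjb f b c && adjb f c d && adjb f d e && adjb f e a
  | _ => false

def bowOn (f : Fin 10 → Bool) (l : List (Fin 5)) : Bool :=
  match l with
  | [v, x, y, z, w] => adjb f v x && adjb f v y && adjb f x y && adjb f v z && adjb f v w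
      && adjb f z w
  | _ => false

def perms5 : List (List (Fin 5)) := (List.finRange 5).permutations'

def cond (f : Fin 10 → Bool) : Bool :=
  ((List.finRange 5).all fun a => 2 ≤ degb f a) &&
  ((List.finRange 5).all fun a => !(degb f a == 2) ||
    ((List.finRange 5).any fun x => (List.finRange 5).any fun y =>
      adjb f x y && !(adjb f a x) && !(adjb f a y)))

theorem key' : ∀ b0 b1 b2 b3 b4 b5 b6 b7 b8 b9 : Bool,
    cond ![b0, b1, b2, b3, b4, b5, b6, b7, b8, b9] = true →
    (perms5.any (hamOn ![b0, b1, b2, b3, b4, b5, b6, b7, b8, b9]) = true) ∨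
    (perms5.any (bowOn ![b0, b1, b2, b3, b4, b5, b6, b7, b8, b9]) = true) := by decide

theorem idx_cases : ∀ a b : Fin 5, a ≠ b →
    (pFst (idx a b) = a ∧ pSnd (idx a b) = b) ∨ (pFst (idx a b) = b ∧ pSnd (idx a b) = a) := by
  decide

theorem key (f : Fin 10 → Bool) (h : cond f = true) :
    (perms5.any (hamOn f) = true) ∨ (perms5.any (bowOn f) = true) := by
  have hfe : ![f 0, f 1, f 2, f 3, f 4, f 5, f 6, f 7, f 8, f 9] = f := by
    funext k; fin_cases k <;> rfl
  have := key' (f 0) (f 1) (f 2) (f 3) (f 4) (f 5) (f 6) (f 7) (f 8) (f 9)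
  rw [hfe] at this
  exact this h

theorem classify {V₂ : Type*} [Fintype V₂] (H₂ : SimpleGraph V₂) (hc2 : Fintype.card V₂ = 5)
    (F1 : ∀ i : V₂, 2 ≤ (Finset.univ.filter (fun j => H₂.Adj i j)).card)
    (F2 : ∀ i : V₂, (Finset.univ.filter (fun j => H₂.Adj i j)).card = 2 →
      ∃ a b : V₂, H₂.Adj a b ∧ ¬ H₂.Adj i a ∧ ¬ H₂.Adj i b) :
    (∃ c : Fin 5 → V₂, Function.Bijective c ∧ ∀ k : Fin 5, H₂.Adj (c k) (c (k + 1))) ∨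
    (∃ v x y z w : V₂, ({v, x, y, z, w} : Set V₂) = Set.univ ∧
      ({x, y} : Set V₂) ∩ {z, w} = ∅ ∧ v ∉ ({x, y, z, w} : Set V₂) ∧
      H₂.Adj v x ∧ H₂.Adj v y ∧ H₂.Adj x y ∧
      H₂.Adj v z ∧ H₂.Adj v w ∧ H₂.Adj z w) := by
  classical
  set e : V₂ ≃ Fin 5 := Fintype.equivFinOfCardEq hc2 with hedef
  set f : Fin 10 → Bool :=
    fun k => decide (H₂.Adj (e.symm (pFst k)) (e.symm (pSnd k))) with hfdef
  have hf : ∀ a b : Fin 5, a ≠ b → (f (idx a b) = true ↔ H₂.Adj (e.symm a) (e.symm b)) := by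
    intro a b hab
    rcases idx_cases a b hab with ⟨h1, h2⟩ | ⟨h1, h2⟩ <;>
      rw [hfdef] <;> simp only [h1, h2, decide_eq_true_iff]
    exact SimpleGraph.adj_comm _ _ _
  have hadjb : ∀ a b : Fin 5, adjb f a b = true ↔ H₂.Adj (e.symm a) (e.symm b) := by
    intro a b
    by_cases hab : a = b
    · subst hab
      simp only [adjb, beq_self_eq_true, Bool.not_true, Bool.false_and]
      constructor
      · intro h; simp at h
      · intro h; exact absurd h (H₂.irrefl)
    · simp only [adjb, Bool.and_eq_true, Bool.not_eq_true', beq_eq_false_iff_ne, ne_eq]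
      rw [hf a b hab]
      tauto
  have hdeg : ∀ a : Fin 5, degb f a
      = (Finset.univ.filter (fun j => H₂.Adj (e.symm a) j)).card := by
    intro a
    have h1 : degb f a = (Finset.univ.filter (fun b => adjb f a b = true)).card := by
      rw [degb, ← List.toFinset_finRange 5]
      rw [← List.toFinset_filter]
      exact (List.toFinset_card_of_nodup ((List.nodup_finRange 5).filter _)).symm
    rw [h1]
    apply Finset.card_bij' (fun b _ => e.symm b) (fun j _ => e j)
    · intro b hb
      simp only [Finset.mem_filter, Finset.mem_univ, true_and] at hb ⊢
      exact (hadjb a b).mp hb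
    · intro j hj
      simp only [Finset.mem_filter, Finset.mem_univ, true_and] at hj ⊢
      exact (hadjb a (e j)).mpr (by simpa using hj)
    · intro b _; simp
    · intro j _; simp
  have hcond : cond f = true := by
    rw [cond, Bool.and_eq_true, List.all_eq_true, List.all_eq_true]
    constructor
    · intro a _
      simpa [decide_eq_true_iff] using (hdeg a ▸ F1 (e.symm a))
    · intro a _
      rw [Bool.or_eq_true, Bool.not_eq_true', beq_eq_false_iff_ne]
      by_cases h2 : degb f a = 2
      · right
        obtain ⟨x, y, hxy, hax, hay⟩ := F2 (e.symm a) (by rw [← hdeg a]; exact h2)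
        rw [List.any_eq_true]
        refine ⟨e x, by simp, ?_⟩
        rw [List.any_eq_true]
        refine ⟨e y, by simp, ?_⟩
        have h1 : adjb f (e x) (e y) = true := (hadjb _ _).mpr (by simpa using hxy)
        have h2 : adjb f a (e x) = false := by
          rw [← Bool.not_eq_true, hadjb]; simpa using hax
        have h3 : adjb f a (e y) = false := by
          rw [← Bool.not_eq_true, hadjb]; simpa using hay
        rw [h1, h2, h3]; rfl
      · left; exact h2
  rcases key f hcond with h | h
  · left
    obtain ⟨l, hl, hhl⟩ := List.any_eq_true.mp h
    have hperm : List.Perm l (List.finRange 5) := List.mem_permutations'.mp hl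
    have hlen := hperm.length_eq
    simp only [List.length_finRange] at hlen
    have hnd : l.Nodup := hperm.nodup_iff.mpr (List.nodup_finRange 5)
    obtain ⟨a, b, c, d, e5, rfl⟩ : ∃ (a b c d e5 : Fin 5), l = [a, b, c, d, e5] := by
      rcases l with _ | ⟨a, _ | ⟨b, _ | ⟨c, _ | ⟨d, _ | ⟨e5, _ | ⟨x, t⟩⟩⟩⟩⟩⟩ <;> simp at hlen
      exact ⟨a, b, c, d, e5, rfl⟩
    simp only [hamOn, Bool.and_eq_true] at hhl
    obtain ⟨⟨⟨⟨h1, h2⟩, h3⟩, h4⟩, h5⟩ := hhl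
    simp only [List.nodup_cons, List.mem_cons, List.mem_singleton, List.not_mem_nil,
      List.nodup_nil, not_or, not_false_iff, and_true] at hnd
    obtain ⟨⟨hab, hac, had, hae⟩, ⟨hbc, hbd, hbe⟩, ⟨hcd, hce⟩, hde⟩ := hnd
    refine ⟨fun k => e.symm (![a, b, c, d, e5] k), ⟨?_, ?_⟩, ?_⟩
    · intro k1 k2 hk
      have := e.symm.injective hk
      fin_cases k1 <;> fin_cases k2 <;> simp_all
    · have hinj : Function.Injective (fun k => e.symm (![a, b, c, d, e5] k)) := by
        intro k1 k2 hk
        have := e.symm.injective hk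
        fin_cases k1 <;> fin_cases k2 <;> simp_all
      have hcard : Fintype.card (Fin 5) = Fintype.card V₂ := by simp [hc2]
      exact ((Fintype.bijective_iff_injective_and_card _).mpr ⟨hinj, hcard⟩).surjective
    · intro k
      fin_cases k
      · exact (hadjb a b).mp h1
      · exact (hadjb b c).mp h2
      · exact (hadjb c d).mp h3
      · exact (hadjb d e5).mp h4
      · exact (hadjb e5 a).mp h5
  · right
    obtain ⟨l, hl, hhl⟩ := List.any_eq_true.mp h
    have hperm : List.Perm l (List.finRange 5) := List.mem_permutations'.mp hl
    have hlen := hperm.length_eq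
    simp only [List.length_finRange] at hlen
    have hnd : l.Nodup := hperm.nodup_iff.mpr (List.nodup_finRange 5)
    have hmem : ∀ x : Fin 5, x ∈ l := fun x => hperm.mem_iff.mpr (by simp)
    obtain ⟨v', x', y', z', w', rfl⟩ : ∃ (a b c d e5 : Fin 5), l = [a, b, c, d, e5] := by
      rcases l with _ | ⟨a, _ | ⟨b, _ | ⟨c, _ | ⟨d, _ | ⟨e5, _ | ⟨x, t⟩⟩⟩⟩⟩⟩ <;> simp at hlen
      exact ⟨a, b, c, d, e5, rfl⟩
    simp only [bowOn, Bool.and_eq_true] at hhl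
    obtain ⟨⟨⟨⟨⟨h1, h2⟩, h3⟩, h4⟩, h5⟩, h6⟩ := hhl
    simp only [List.nodup_cons, List.mem_cons, List.mem_singleton, List.not_mem_nil,
      List.nodup_nil, not_or, not_false_iff, and_true] at hnd
    obtain ⟨⟨hvx, hvy, hvz, hvw⟩, ⟨hxy, hxz, hxw⟩, ⟨hyz, hyw⟩, hzw⟩ := hnd
    refine ⟨e.symm v', e.symm x', e.symm y', e.symm z', e.symm w', ?_, ?_, ?_,
      (hadjb _ _).mp h1, (hadjb _ _).mp h2, (hadjb _ _).mp h3,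
      (hadjb _ _).mp h4, (hadjb _ _).mp h5, (hadjb _ _).mp h6⟩
    · apply Set.eq_univ_iff_forall.mpr
      intro u
      have hu := hmem (e u)
      simp only [List.mem_cons, List.mem_singleton, List.not_mem_nil, or_false] at hu
      have : u = e.symm (e u) := (e.symm_apply_apply u).symm
      simp only [Set.mem_insert_iff, Set.mem_singleton_iff]
      rcases hu with h | h | h | h | h
      · left; rw [this, h]
      · right; left; rw [this, h]
      · right; right; left; rw [this, h]
      · right; right; right; left; rw [this, h]
      · right; right; right; right; rw [this, h]
    · apply Set.eq_empty_iff_forall_notMem.mpr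
      rintro u ⟨hu1, hu2⟩
      simp only [Set.mem_insert_iff, Set.mem_singleton_iff] at hu1 hu2
      have hinj := e.symm.injective
      rcases hu1 with rfl | rfl <;> rcases hu2 with h | h
      · exact hxz (hinj h)
      · exact hxw (hinj h)
      · exact hyz (hinj h)
      · exact hyw (hinj h)
    · simp only [Set.mem_insert_iff, Set.mem_singleton_iff, not_or]
      have hinj := e.symm.injective
      exact ⟨fun h => hvx (hinj h), fun h => hvy (hinj h),
        fun h => hvz (hinj h), fun h => hvw (hinj h)⟩

end Aux2

/-- A disconnected 4-saturating graph with matching number 3 on 8 vertices which is the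
disjoint union of a triangle and a connected graph on 5 vertices has second component
3-saturating, i.e. spanned by a pentagon or by two triangles meeting at a vertex. -/
theorem fourSat_eight_disconnected {V₁ V₂ : Type*} [Fintype V₁] [Fintype V₂]
    (H₁ : SimpleGraph V₁) (H₂ : SimpleGraph V₂)
    (hc1 : Fintype.card V₁ = 3) (hc2 : Fintype.card V₂ = 5)
    (hH1 : H₁ = ⊤) (hconn : H₂.Connected)
    (hsat : IsTSat (sumGraph H₁ H₂) (fun _ => 1) 4)
    (hnu : wNu (sumGraph H₁ H₂) (fun _ => 1) = 3) :
    IsTSat H₂ (fun _ => 1) 3 ∧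
      ((∃ c : Fin 5 → V₂, Function.Bijective c ∧ ∀ k : Fin 5, H₂.Adj (c k) (c (k + 1))) ∨
       (∃ v x y z w : V₂, ({v, x, y, z, w} : Set V₂) = Set.univ ∧
        ({x, y} : Set V₂) ∩ {z, w} = ∅ ∧ v ∉ ({x, y, z, w} : Set V₂) ∧
        H₂.Adj v x ∧ H₂.Adj v y ∧ H₂.Adj x y ∧
        H₂.Adj v z ∧ H₂.Adj v w ∧ H₂.Adj z w)) := by
  subst hH1
  classical
  -- K3 has matching number 1
  have hk3 : wNu (⊤ : SimpleGraph V₁) (fun _ => 1) = 1 := by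
    apply le_antisymm
    · have := Aux.two_wNu_le (⊤ : SimpleGraph V₁) (fun _ => 1)
      simp only [Finset.sum_const, Finset.card_univ, hc1, smul_eq_mul, mul_one] at this
      omega
    · obtain ⟨x, y, hxy⟩ := Fintype.exists_pair_of_one_lt_card (by omega : 1 < Fintype.card V₁)
      have hM : IsWMatching (⊤ : SimpleGraph V₁) (fun _ => 1) {(x, y)} := by
        constructor
        · intro e he
          rw [Multiset.mem_singleton] at he
          subst he
          exact hxy
        · intro v
          simp only [Multiset.map_singleton, Multiset.count_singleton]
          by_cases hvx : v = x <;> by_cases hvy : v = y <;> simp_all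
      have := Aux.le_wNu hM
      simpa using this
  -- decomposition of wNu of the sum
  have hsum : wNu (sumGraph (⊤ : SimpleGraph V₁) H₂) (fun _ => 1)
      = wNu (⊤ : SimpleGraph V₁) (fun _ => 1) + wNu H₂ (fun _ => 1) :=
    Aux.wNu_sumGraph _ _ _
  have hnu2 : wNu H₂ (fun _ => 1) = 2 := by
    rw [hsum, hk3] at hnu
    omega
  -- weighted degree of a right vertex
  have hwdeg : ∀ i : V₂, wDeg (sumGraph (⊤ : SimpleGraph V₁) H₂) (fun _ => 1) (Sum.inr i)
      = wDeg H₂ (fun _ => 1) i := by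
    intro i
    rw [wDeg, wDeg, Finset.sum_filter, Finset.sum_filter, Fintype.sum_sum_type]
    have hz : ∀ a : V₁, (if (sumGraph (⊤ : SimpleGraph V₁) H₂).Adj (Sum.inr i) (Sum.inl a)
        then (1 : ℕ) else 0) = 0 := by
      intro a
      simp [sumGraph]
    simp only [hz, Finset.sum_const_zero, zero_add]
    congr 1
  -- the saturation inequality transferred to H₂
  have hsat2 : ∀ i : V₂, 3 - wDeg H₂ (fun _ => 1) i
      ≤ wNu (H₂.induce {v | ¬ H₂.Adj i v}) (fun _ => 1) := by
    intro i
    have h := hsat.2 (Sum.inr i)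
    rw [hwdeg i] at h
    have hco : wNu ((sumGraph (⊤ : SimpleGraph V₁) H₂).induce
          {v | ¬ (sumGraph (⊤ : SimpleGraph V₁) H₂).Adj (Sum.inr i) v}) (fun _ => 1)
        = wNu (sumGraph (⊤ : SimpleGraph V₁) (H₂.induce {v | ¬ H₂.Adj i v})) (fun _ => 1) := by
      refine Aux.wNu_congr (Aux.eInd (⊤ : SimpleGraph V₁) H₂ i) ?_ ?_
      · rintro ⟨(x | x), hx⟩ ⟨(y | y), hy⟩ <;> exact Iff.rfl
      · rintro ⟨(x | x), hx⟩ <;> rfl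
    rw [hco, Aux.wNu_sumGraph, hk3] at h
    omega
  have hTSat : IsTSat H₂ (fun _ => 1) 3 := ⟨by omega, hsat2⟩
  -- degree as a cardinality
  have hdegcard : ∀ i : V₂, wDeg H₂ (fun _ => 1) i
      = (Finset.univ.filter (fun j => H₂.Adj i j)).card := by
    intro i
    rw [wDeg]
    simp
  -- cardinality of the non-neighbour set
  have hScard : ∀ i : V₂, Fintype.card {v : V₂ // v ∈ {v : V₂ | ¬ H₂.Adj i v}}
      = 5 - (Finset.univ.filter (fun j => H₂.Adj i j)).card := by
    intro i
    rw [Fintype.card_subtype]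
    have : Finset.univ.filter (fun v => v ∈ {v : V₂ | ¬ H₂.Adj i v})
        = Finset.univ \ Finset.univ.filter (fun j => H₂.Adj i j) := by
      ext v
      simp [Set.mem_setOf_eq]
    rw [this, Finset.card_sdiff_of_subset (Finset.filter_subset _ _), Finset.card_univ, hc2]
  -- minimum degree at least two
  have F1 : ∀ i : V₂, 2 ≤ (Finset.univ.filter (fun j => H₂.Adj i j)).card := by
    intro i
    by_contra hlt
    push_neg at hlt
    have hd : (Finset.univ.filter (fun j => H₂.Adj i j)).card ≤ 1 := by omega
    have hle := hsat2 i
    rw [hdegcard i] at hle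
    obtain ⟨M, hM, hMc⟩ := Aux.exists_matching (H₂.induce {v | ¬ H₂.Adj i v}) (fun _ => 1)
    have hiso : ∀ v : {v : V₂ // v ∈ {v : V₂ | ¬ H₂.Adj i v}},
        ¬ (H₂.induce {v | ¬ H₂.Adj i v}).Adj ⟨i, H₂.irrefl⟩ v := by
      rintro ⟨b, hb⟩ hadj
      exact hb hadj
    have hbd := Aux.matching_bound_erase hM ⟨i, H₂.irrefl⟩ hiso
    have hsum1 := Aux.sum_one_erase (fun a b => Classical.propDecidable (a = b))
      (⟨i, H₂.irrefl⟩ : {v : V₂ // v ∈ {v : V₂ | ¬ H₂.Adj i v}})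
    have hbd' : 2 * Multiset.card M
        ≤ Fintype.card {v : V₂ // v ∈ {v : V₂ | ¬ H₂.Adj i v}} - 1 :=
      le_trans hbd (le_of_eq hsum1)
    rw [hScard i] at hbd'
    omega
  -- every degree-two vertex has an edge among its non-neighbours
  have F2 : ∀ i : V₂, (Finset.univ.filter (fun j => H₂.Adj i j)).card = 2 →
      ∃ a b : V₂, H₂.Adj a b ∧ ¬ H₂.Adj i a ∧ ¬ H₂.Adj i b := by
    intro i hdi
    have hle := hsat2 i
    rw [hdegcard i, hdi] at hle
    obtain ⟨M, hM, hMc⟩ := Aux.exists_matching (H₂.induce {v | ¬ H₂.Adj i v}) (fun _ => 1)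
    have hpos : 0 < Multiset.card M := by omega
    obtain ⟨x, hx⟩ := Multiset.exists_mem_of_ne_zero (Multiset.card_pos.mp hpos)
    have hadj := hM.1 x hx
    exact ⟨x.1.1, x.2.1, hadj, x.1.2, x.2.2⟩
  exact ⟨hTSat, Aux2.classify H₂ hc2 F1 F2⟩
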